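/- Let N be a positive integer and define φ(j,1) = (j/N²)(1 + j − N + 2N(H_{N−1} − H_{j−1})) and φ(j,2) = j(N−j+1)/N², where H_n = Σ_{m=1}^{n} 1/m (H_0 = 0). Then for every integer k with 2 ≤ k ≤ N: Σ_{j=k+1}^{N} [ k(k−1) / (j(j−1)(j−2)) ] · ( φ(j,1) + φ(j,2) ) = (2k/N²) ( k − N + N(H_{N−1} − H_{k−1}) ). -/
import Mathlib


/-- The `n`-th harmonic number `H_n = Σ_{j=1}^{n} 1/j` (with `H_0 = 0`), as a real number. -/
noncomputable def harm (n : ℕ) : ℝ := ∑ j ∈ Finset.Icc 1 n, (1 : ℝ) / j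

lemma harm_succ (n : ℕ) : harm (n + 1) = harm n + 1 / ((n : ℝ) + 1) := by
  unfold harm
  rw [Finset.sum_Icc_succ_top (by omega : 1 ≤ n + 1)]
  push_cast; ring

lemma harm_pred (k : ℕ) (hk : 1 ≤ k) : harm k = harm (k - 1) + 1 / (k : ℝ) := by
  obtain ⟨m, rfl⟩ : ∃ m, k = m + 1 := ⟨k - 1, by omega⟩
  simp [harm_succ]

lemma aux (N : ℕ) : ∀ d k : ℕ, 2 ≤ k → k + d = N →
    ∑ j ∈ Finset.Icc (k + 1) N,
        ((k : ℝ) * ((k : ℝ) - 1) / ((j : ℝ) * ((j : ℝ) - 1) * ((j : ℝ) - 2))) *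
          ((((j : ℝ) / (N : ℝ) ^ 2) *
              (1 + (j : ℝ) - N + 2 * (N : ℝ) * (harm (N - 1) - harm (j - 1)))) +
            (j : ℝ) * ((N : ℝ) - j + 1) / (N : ℝ) ^ 2)
      = (2 * (k : ℝ) / (N : ℝ) ^ 2) *
          ((k : ℝ) - N + (N : ℝ) * (harm (N - 1) - harm (k - 1))) := by
  intro d
  induction d with
  | zero =>
    intro k hk hkN
    have hN : N = k := by omega
    subst hN
    rw [Finset.Icc_eq_empty (by omega)]
    simp
  | succ d ih =>
    intro k hk hkN
    have hN3 : 3 ≤ N := by omega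
    have hset : Finset.Icc (k + 1) N = insert (k + 1) (Finset.Icc (k + 1 + 1) N) := by
      ext x; simp only [Finset.mem_Icc, Finset.mem_insert]; omega
    have hnotmem : (k + 1) ∉ Finset.Icc (k + 1 + 1) N := by
      simp
    rw [hset, Finset.sum_insert hnotmem]
    have hk0 : (k : ℝ) ≠ 0 := by positivity
    have hk1 : (k : ℝ) - 1 ≠ 0 := by
      have : (2 : ℝ) ≤ (k : ℝ) := by exact_mod_cast hk
      nlinarith
    have hk2 : (k : ℝ) + 1 ≠ 0 := by positivity
    have hNne : (N : ℝ) ≠ 0 := by positivity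
    have htail : ∑ j ∈ Finset.Icc (k + 1 + 1) N,
        ((k : ℝ) * ((k : ℝ) - 1) / ((j : ℝ) * ((j : ℝ) - 1) * ((j : ℝ) - 2))) *
          ((((j : ℝ) / (N : ℝ) ^ 2) *
              (1 + (j : ℝ) - N + 2 * (N : ℝ) * (harm (N - 1) - harm (j - 1)))) +
            (j : ℝ) * ((N : ℝ) - j + 1) / (N : ℝ) ^ 2)
        = ((k : ℝ) - 1) / ((k : ℝ) + 1) *
          ∑ j ∈ Finset.Icc (k + 1 + 1) N,
        (((k + 1 : ℕ) : ℝ) * (((k + 1 : ℕ) : ℝ) - 1) / ((j : ℝ) * ((j : ℝ) - 1) * ((j : ℝ) - 2))) *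
          ((((j : ℝ) / (N : ℝ) ^ 2) *
              (1 + (j : ℝ) - N + 2 * (N : ℝ) * (harm (N - 1) - harm (j - 1)))) +
            (j : ℝ) * ((N : ℝ) - j + 1) / (N : ℝ) ^ 2) := by
      rw [Finset.mul_sum]
      apply Finset.sum_congr rfl
      intro j hj
      simp only [Finset.mem_Icc] at hj
      have hj4 : 4 ≤ j := by omega
      have hj0 : (j : ℝ) ≠ 0 := by positivity
      have hj1 : (j : ℝ) - 1 ≠ 0 := by
        have : (4 : ℝ) ≤ (j : ℝ) := by exact_mod_cast hj4
        nlinarith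
      have hj2 : (j : ℝ) - 2 ≠ 0 := by
        have : (4 : ℝ) ≤ (j : ℝ) := by exact_mod_cast hj4
        nlinarith
      push_cast
      field_simp
      ring
    rw [htail, ih (k + 1) (by omega) (by omega)]
    have hkey : harm k = harm (k - 1) + 1 / (k : ℝ) := harm_pred k (by omega)
    have hsub : k + 1 - 1 = k := by omega
    rw [hsub, hkey]
    push_cast
    have e1 : ((k:ℝ) + 1) * ((k:ℝ) + 1 - 1) * ((k:ℝ) + 1 - 2) = ((k:ℝ) + 1) * (k:ℝ) * ((k:ℝ) - 1) := by ring
    rw [e1]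
    field_simp
    ring

/-- One-step expected payoff of the embedded Markov chain of candidate times:
`Σ_{j=k+1}^{N} [k(k−1)/(j(j−1)(j−2))](φ(j,1) + φ(j,2)) = (2k/N²)(k − N + N(H_{N−1} − H_{k−1}))`. -/
theorem embedded_one_step_payoff (N k : ℕ) (hk : 2 ≤ k) (hkN : k ≤ N) :
    ∑ j ∈ Finset.Icc (k + 1) N,
        ((k : ℝ) * ((k : ℝ) - 1) / ((j : ℝ) * ((j : ℝ) - 1) * ((j : ℝ) - 2))) *
          ((((j : ℝ) / (N : ℝ) ^ 2) *
              (1 + (j : ℝ) - N + 2 * (N : ℝ) * (harm (N - 1) - harm (j - 1)))) +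
            (j : ℝ) * ((N : ℝ) - j + 1) / (N : ℝ) ^ 2)
      = (2 * (k : ℝ) / (N : ℝ) ^ 2) *
          ((k : ℝ) - N + (N : ℝ) * (harm (N - 1) - harm (k - 1))) := by
  exact aux N (N - k) k hk (by omega)
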